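/- arXiv:1408.5065 — 2 statements merged into one kernel-verified Lean document; each statement's English description precedes it below -/
import Mathlib

section
/- Let X be a Banach space with a Schauder basis and let t > 1. If D_t(X) = ξ for some countable ordinal ξ, then X is t-𝓢_ζ distortable для every countable ordinal ζ with ξ < ζ < ω₁. -/
open Filter Topology

noncomputable section

/-- The first uncountable ordinal `ω₁`. -/
def omega1 : Ordinal := (Cardinal.aleph 1).ord

/-- The combinatorial operation `𝓕[𝓖]` on families of finite subsets of `ℕ`:
all unions `E₁ ∪ ⋯ ∪ Eₙ` with `E₁ < ⋯ < Eₙ` nonempty members of `𝓖` and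
`(min Eᵢ)ᵢ ∈ 𝓕`. -/
def famOp (F G : Set (Finset ℕ)) : Set (Finset ℕ) :=
  {E | ∃ (n : ℕ) (Es : ℕ → Finset ℕ),
    (∀ i < n, Es i ∈ G) ∧ (∀ i < n, (Es i).Nonempty) ∧
    (∀ i j : ℕ, i < j → j < n → ∀ a ∈ Es i, ∀ b ∈ Es j, a < b) ∧
    (Finset.image (fun i => sInf ((Es i : Set ℕ))) (Finset.range n) ∈ F) ∧
    E = (Finset.range n).biUnion Es}

/-- The first Schreier family `𝓢₁ = {E : |E| ≤ min E}`. -/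
def schreierOne : Set (Finset ℕ) := {E : Finset ℕ | ∀ n ∈ E, E.card ≤ n}

/-- A system of Schreier families `(𝓢_ξ)` together with the fixed cofinal sequences
`(ξ_n)` used at countable limit ordinals: `𝓢_0 = {∅} ∪ {{n} : n ∈ ℕ}`,
`𝓢_{ξ+1} = 𝓢₁[𝓢_ξ]`, and at a countable limit `ξ`,
`𝓢_ξ = {E : ∃ n, n ≤ min E ∧ E ∈ 𝓢_{ξ_n}}` where `ξ_n ↑ ξ` and
`𝓢_{ξ_n} ⊆ 𝓢_{ξ_{n+1}}`. -/
structure SchreierSystem where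
  S : Ordinal → Set (Finset ℕ)
  seq : Ordinal → ℕ → Ordinal
  S_zero : S 0 = {E : Finset ℕ | E = ∅ ∨ ∃ n : ℕ, E = {n}}
  S_succ : ∀ ξ : Ordinal, S (ξ + 1) = famOp schreierOne (S ξ)
  seq_strictMono : ∀ ξ : Ordinal, ξ < omega1 → Order.IsSuccLimit ξ → StrictMono (seq ξ)
  seq_lt : ∀ ξ : Ordinal, ξ < omega1 → Order.IsSuccLimit ξ → ∀ n : ℕ, seq ξ n < ξ
  seq_iSup : ∀ ξ : Ordinal, ξ < omega1 → Order.IsSuccLimit ξ → (⨆ n : ℕ, seq ξ n) = ξ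
  S_seq_mono : ∀ ξ : Ordinal, ξ < omega1 → Order.IsSuccLimit ξ → ∀ n : ℕ, S (seq ξ n) ⊆ S (seq ξ (n + 1))
  S_limit : ∀ ξ : Ordinal, ξ < omega1 → Order.IsSuccLimit ξ →
    S ξ = {E : Finset ℕ | ∃ n : ℕ, (∀ m ∈ E, n ≤ m) ∧ E ∈ S (seq ξ n)}

section Distortion

variable {V : Type*} [NormedAddCommGroup V] [NormedSpace ℝ V]

/-- `e` is a Schauder basis of `V`: every vector has a unique expansion
`x = Σ_i a i • e i` (convergence of the partial sums in norm). -/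
def IsSchauderBasis (e : ℕ → V) : Prop :=
  ∀ x : V, ∃! a : ℕ → ℝ,
    Filter.Tendsto (fun n => ∑ i ∈ Finset.range n, a i • e i) Filter.atTop (nhds x)

/-- `u` is a block sequence of `e`: a sequence of nonzero vectors belonging to the spans
of successive finite subsets of the basis. -/
def IsBlockSeqOf (e : ℕ → V) (u : ℕ → V) : Prop :=
  (∀ n, u n ≠ 0) ∧ ∃ E : ℕ → Finset ℕ,
    (∀ m n : ℕ, m < n → ∀ i ∈ E m, ∀ j ∈ E n, i < j) ∧
    ∀ n, u n ∈ Submodule.span ℝ (e '' (E n : Set ℕ))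

/-- The closed linear span of the sequence `e` (the space with basis `e`). -/
def spanClosure (e : ℕ → V) : Set V :=
  closure ((Submodule.span ℝ (Set.range e) : Submodule ℝ V) : Set V)

/-- `N` is (the restriction to `Xs` of) a norm equivalent to `‖·‖` on `Xs`. -/
def IsEquivNormOn (Xs : Set V) (N : V → ℝ) : Prop :=
  (∀ x ∈ Xs, ∀ y ∈ Xs, N (x + y) ≤ N x + N y) ∧
  (∀ (a : ℝ), ∀ x ∈ Xs, N (a • x) = |a| * N x) ∧
  (∃ c C : ℝ, 0 < c ∧ 0 < C ∧ ∀ x ∈ Xs, c * ‖x‖ ≤ N x ∧ N x ≤ C * ‖x‖)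

/-- `N` is a `t`-`𝓕` distortion of the space with basis `e`: an equivalent norm such that
every normalized block sequence `(u_i)` admits `E ∈ 𝓕` and vectors `v, w` in
`span{u_i : i ∈ E}` with `‖v‖ = ‖w‖ = 1` and `N v / N w > t`. -/
def IsFamDistortion (e : ℕ → V) (F : Set (Finset ℕ)) (t : ℝ) (N : V → ℝ) : Prop :=
  IsEquivNormOn (spanClosure e) N ∧
  ∀ u : ℕ → V, IsBlockSeqOf e u → (∀ n, ‖u n‖ = 1) →
    ∃ E : Finset ℕ, E ∈ F ∧ ∃ v w : V,
      v ∈ Submodule.span ℝ (u '' (E : Set ℕ)) ∧ w ∈ Submodule.span ℝ (u '' (E : Set ℕ)) ∧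
      ‖v‖ = 1 ∧ ‖w‖ = 1 ∧ t * N w < N v

/-- The space with basis `e` is `t`-distortable: some equivalent norm witnesses, on every
normalized block sequence, a ratio `> t` on some pair of normalized vectors of the span of
finitely many of its terms. -/
def IsTDistortable (e : ℕ → V) (t : ℝ) : Prop :=
  ∃ N : V → ℝ, IsEquivNormOn (spanClosure e) N ∧
    ∀ u : ℕ → V, IsBlockSeqOf e u → (∀ n, ‖u n‖ = 1) →
      ∃ E : Finset ℕ, ∃ v w : V,
        v ∈ Submodule.span ℝ (u '' (E : Set ℕ)) ∧ w ∈ Submodule.span ℝ (u '' (E : Set ℕ)) ∧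
        ‖v‖ = 1 ∧ ‖w‖ = 1 ∧ t * N w < N v

/-- The distortion index `D_t`: the least countable `ξ` such that the space with basis `e`
is `t`-`𝓢_ξ` distortable, and `ω₁` if there is no such `ξ`. -/
def Dt (SS : SchreierSystem) (e : ℕ → V) (t : ℝ) : Ordinal :=
  sInf ({ξ : Ordinal | ξ < omega1 ∧ ∃ N : V → ℝ, IsFamDistortion e (SS.S ξ) t N} ∪ {omega1})

/-- The index `AD`: the least countable `ξ` such that the space with basis `e` is
`𝓢_ξ` arbitrarily distortable (i.e. `t`-`𝓢_ξ` distortable for every `t ≥ 1`),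
and `ω₁` if there is no such `ξ`. -/
def ADidx (SS : SchreierSystem) (e : ℕ → V) : Ordinal :=
  sInf ({ξ : Ordinal | ξ < omega1 ∧
    ∀ t : ℝ, 1 ≤ t → ∃ N : V → ℝ, IsFamDistortion e (SS.S ξ) t N} ∪ {omega1})

end Distortion

/-!
By minimality of `D_t(X) = ξ` there is a `t`-`𝓢_ξ` distortion `N`. Since `ξ < ζ`, every set of
`𝓢_ξ` with minimum at least some `n` already lies in `𝓢_ζ`; and `𝓢_ξ` is invariant under
translation. So applying `N` to the tail `(u_{i+n})` of a normalized block sequence and translating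
the resulting set by `n` gives a set of `𝓢_ζ` that witnesses the distortion for `(u_i)`.
-/

lemma Finset.sInf_image_add_right {E : Finset ℕ} (hE : E.Nonempty) (k : ℕ) :
    sInf ((E.image (· + k) : Finset ℕ) : Set ℕ) = sInf (E : Set ℕ) + k := by
  rw [(hE.image _).csInf_eq_min', hE.csInf_eq_min', Finset.min'_image add_left_mono]

lemma image_add_mem_schreierOne {E : Finset ℕ} (hE : E ∈ schreierOne) (k : ℕ) :
    E.image (· + k) ∈ schreierOne := by
  intro m hm
  obtain ⟨a, ha, rfl⟩ := Finset.mem_image.mp hm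
  calc (E.image (· + k)).card ≤ E.card := Finset.card_image_le
    _ ≤ a := hE a ha
    _ ≤ a + k := Nat.le_add_right a k

lemma image_add_mem_famOp_schreierOne {G : Set (Finset ℕ)} {k : ℕ}
    (hG : ∀ E ∈ G, E.image (· + k) ∈ G) {E : Finset ℕ} (hE : E ∈ famOp schreierOne G) :
    E.image (· + k) ∈ famOp schreierOne G := by
  obtain ⟨n, Es, hEsG, hne, hlt, hmins, rfl⟩ := hE
  refine ⟨n, fun i => (Es i).image (· + k), fun i hi => hG _ (hEsG i hi),
    fun i hi => (hne i hi).image _, ?_, ?_, Finset.biUnion_image⟩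
  · intro i j hij hjn a ha b hb
    obtain ⟨a, ha', rfl⟩ := Finset.mem_image.mp ha
    obtain ⟨b, hb', rfl⟩ := Finset.mem_image.mp hb
    exact Nat.add_lt_add_right (hlt i j hij hjn a ha' b hb') k
  · have hshift : (Finset.range n).image (fun i => sInf (((Es i).image (· + k) : Finset ℕ) : Set ℕ))
        = ((Finset.range n).image fun i => sInf (Es i : Set ℕ)).image (· + k) := by
      rw [Finset.image_image]
      exact Finset.image_congr fun i hi =>
        Finset.sInf_image_add_right (hne i (Finset.mem_range.mp hi)) k
    rw [hshift]
    exact image_add_mem_schreierOne hmins k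

lemma mem_famOp_schreierOne_of_mem {G : Set (Finset ℕ)} {E : Finset ℕ} (hE : E ∈ G)
    (hpos : ∀ m ∈ E, 1 ≤ m) : E ∈ famOp schreierOne G := by
  rcases E.eq_empty_or_nonempty with rfl | hne
  · exact ⟨0, fun _ => ∅, by simp, by simp, by simp, by simp [schreierOne], by simp⟩
  · refine ⟨1, fun _ => E, fun _ _ => hE, fun _ _ => hne, by omega, ?_, by simp⟩
    intro m hm
    rw [Finset.range_one, Finset.image_singleton, Finset.mem_singleton] at hm
    subst hm
    simpa [hne.csInf_eq_min'] using hpos _ (E.min'_mem hne)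

namespace SchreierSystem

variable (SS : SchreierSystem)

lemma image_add_mem {ξ : Ordinal} (hξ : ξ < omega1) {E : Finset ℕ} (hE : E ∈ SS.S ξ) (k : ℕ) :
    E.image (· + k) ∈ SS.S ξ := by
  induction ξ using Ordinal.limitRecOn generalizing E with
  | zero =>
    rw [SS.S_zero] at hE ⊢
    rcases hE with rfl | ⟨n, rfl⟩
    · exact Or.inl rfl
    · exact Or.inr ⟨n + k, by simp⟩
  | add_one η IH =>
    rw [SS.S_succ] at hE ⊢
    exact image_add_mem_famOp_schreierOne (fun F hF => IH ((lt_add_one η).trans hξ) hF) hE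
  | limit ξ hlim IH =>
    rw [SS.S_limit ξ hξ hlim] at hE ⊢
    obtain ⟨n, hmin, hmem⟩ := hE
    have hn := SS.seq_lt ξ hξ hlim n
    refine ⟨n, fun m hm => ?_, IH _ hn (hn.trans hξ) hmem⟩
    obtain ⟨a, ha, rfl⟩ := Finset.mem_image.mp hm
    exact (hmin a ha).trans (Nat.le_add_right a k)

lemma mem_succ_of_mem {η : Ordinal} {E : Finset ℕ} (hE : E ∈ SS.S η) (hpos : ∀ m ∈ E, 1 ≤ m) :
    E ∈ SS.S (η + 1) := by
  rw [SS.S_succ]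
  exact mem_famOp_schreierOne_of_mem hE hpos

lemma exists_forall_le_mem_of_lt {ζ : Ordinal} (hζ : ζ < omega1) {ξ : Ordinal} (hξζ : ξ < ζ) :
    ∃ n : ℕ, ∀ E ∈ SS.S ξ, (∀ m ∈ E, n ≤ m) → E ∈ SS.S ζ := by
  induction ζ using Ordinal.limitRecOn with
  | zero => exact absurd hξζ (not_lt_zero (a := ξ))
  | add_one η IH =>
    rcases (Order.lt_add_one_iff.mp hξζ).eq_or_lt with rfl | hlt
    · exact ⟨1, fun E hE hm => SS.mem_succ_of_mem hE hm⟩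
    · obtain ⟨n, hn⟩ := IH ((lt_add_one η).trans hζ) hlt
      exact ⟨max n 1, fun E hE hm => SS.mem_succ_of_mem
        (hn E hE fun m hmE => (le_max_left n 1).trans (hm m hmE))
        (fun m hmE => (le_max_right n 1).trans (hm m hmE))⟩
  | limit ζ hlim IH =>
    obtain ⟨k, hk⟩ := Ordinal.lt_iSup_iff.mp ((SS.seq_iSup ζ hζ hlim).symm ▸ hξζ)
    have hkζ := SS.seq_lt ζ hζ hlim k
    obtain ⟨n, hn⟩ := IH _ hkζ (hkζ.trans hζ) hk
    refine ⟨max n k, fun E hE hm => ?_⟩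
    rw [SS.S_limit ζ hζ hlim]
    exact ⟨k, fun m hmE => (le_max_right n k).trans (hm m hmE),
      hn E hE fun m hmE => (le_max_left n k).trans (hm m hmE)⟩

end SchreierSystem

section Distortion

variable {V : Type*} [NormedAddCommGroup V] [NormedSpace ℝ V]

lemma IsBlockSeqOf.comp_add_right {e u : ℕ → V} (hu : IsBlockSeqOf e u) (n : ℕ) :
    IsBlockSeqOf e fun i => u (i + n) := by
  obtain ⟨hne, E, hlt, hspan⟩ := hu
  exact ⟨fun i => hne _, fun i => E (i + n), fun i j hij => hlt _ _ (by omega), fun i => hspan _⟩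

lemma IsFamDistortion.of_tail {e : ℕ → V} {F G : Set (Finset ℕ)} {t : ℝ} {N : V → ℝ}
    (hN : IsFamDistortion e F t N) {n : ℕ} (hF : ∀ E ∈ F, E.image (· + n) ∈ F)
    (hFG : ∀ E ∈ F, (∀ m ∈ E, n ≤ m) → E ∈ G) : IsFamDistortion e G t N := by
  refine ⟨hN.1, fun u hu hnorm => ?_⟩
  obtain ⟨E, hE, v, w, hv, hw, hv1, hw1, hvw⟩ :=
    hN.2 _ (hu.comp_add_right n) fun i => hnorm (i + n)
  have himage :
      (fun i => u (i + n)) '' (E : Set ℕ) = u '' ((E.image (· + n) : Finset ℕ) : Set ℕ) := by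
    rw [Finset.coe_image, Set.image_image]
  refine ⟨E.image (· + n), hFG _ (hF E hE) fun m hm => ?_, v, w, himage ▸ hv, himage ▸ hw,
    hv1, hw1, hvw⟩
  obtain ⟨a, -, rfl⟩ := Finset.mem_image.mp hm
  exact Nat.le_add_left n a

lemma exists_isFamDistortion_of_Dt_eq {SS : SchreierSystem} {e : ℕ → V} {t : ℝ} {ξ : Ordinal}
    (hξ : ξ < omega1) (hD : Dt SS e t = ξ) : ∃ N : V → ℝ, IsFamDistortion e (SS.S ξ) t N := by
  have hmem := csInf_mem (s := {ξ : Ordinal | ξ < omega1 ∧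
    ∃ N : V → ℝ, IsFamDistortion e (SS.S ξ) t N} ∪ {omega1}) ⟨omega1, Or.inr rfl⟩
  rw [← Dt, hD] at hmem
  rcases hmem with ⟨-, hN⟩ | rfl
  · exact hN
  · exact absurd hξ (lt_irrefl _)

end Distortion

theorem statement5_general {X : Type*} [NormedAddCommGroup X] [NormedSpace ℝ X]
    (SS : SchreierSystem) (e : ℕ → X) (t : ℝ)
    (ξ : Ordinal) (hξ : ξ < omega1) (hD : Dt SS e t = ξ)
    (ζ : Ordinal) (hζ₁ : ξ < ζ) (hζ₂ : ζ < omega1) :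
    ∃ N : X → ℝ, IsFamDistortion e (SS.S ζ) t N := by
  obtain ⟨N, hN⟩ := exists_isFamDistortion_of_Dt_eq hξ hD
  obtain ⟨n, hn⟩ := SS.exists_forall_le_mem_of_lt hζ₂ hζ₁
  exact ⟨N, hN.of_tail (fun E hE => SS.image_add_mem hξ hE n) hn⟩

/-- If `D_t(X) = ξ` for some countable ordinal `ξ`, then `X` is
`t`-`𝓢_ζ` distortable for every countable ordinal `ζ` with `ξ < ζ < ω₁`. -/
theorem statement5 {X : Type*} [NormedAddCommGroup X] [NormedSpace ℝ X] [CompleteSpace X]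
    (SS : SchreierSystem) (e : ℕ → X) (he : IsSchauderBasis e) (t : ℝ) (ht : 1 < t)
    (ξ : Ordinal) (hξ : ξ < omega1) (hD : Dt SS e t = ξ)
    (ζ : Ordinal) (hζ₁ : ξ < ζ) (hζ₂ : ζ < omega1) :
    ∃ N : X → ℝ, IsFamDistortion e (SS.S ζ) t N :=
  statement5_general SS e t ξ hξ hD ζ hζ₁ hζ₂
end
end

section
/- Let X be a Banach space with norm ‖·‖, let ξ < ω₁, let (x_i) be a C-ℓ_1^{ω^ξ} spreading model in (X, ‖·‖), and let |·| be an equivalent norm on X. Then for each ε > 0 there exist a blocking (y_i) of (x_i) and λ > 0 such that: (i) (y_i) is a (1+ε)-ℓ_1^{ω^ξ} spreading model in (X, |·|), and (ii) (λ y_i) is a C-ℓ_1^{ω^ξ} spreading model in (X, ‖·‖). -/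
open Filter Topology

noncomputable section

section SpreadingModels

variable {V : Type*} [AddCommGroup V] [Module ℝ V]

/-- `x` is a (Schauder) basic sequence with respect to the norm function `Nm`. -/
def IsBasicSeqWrt (Nm : V → ℝ) (x : ℕ → V) : Prop :=
  (∀ n, x n ≠ 0) ∧ ∃ K : ℝ, 0 < K ∧ ∀ (a : ℕ → ℝ) (m n : ℕ), m ≤ n →
    Nm (∑ i ∈ Finset.range m, a i • x i) ≤ K * Nm (∑ i ∈ Finset.range n, a i • x i)

/-- `x` is a `K`-`ℓ₁^𝓕` spreading model with respect to the norm function `Nm`: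
a basic sequence such that for some `c, C > 0` with `c * C ≤ K`,
`c⁻¹ Σ_{i∈E} |a i| ≤ Nm (Σ_{i∈E} a i • x i) ≤ C Σ_{i∈E} |a i|` for all `E ∈ 𝓕`. -/
def IsL1SMWrt (Nm : V → ℝ) (F : Set (Finset ℕ)) (K : ℝ) (x : ℕ → V) : Prop :=
  IsBasicSeqWrt Nm x ∧ ∃ c C : ℝ, 0 < c ∧ 0 < C ∧ c * C ≤ K ∧
    ∀ E : Finset ℕ, E ∈ F → ∀ a : ℕ → ℝ,
      c⁻¹ * (∑ i ∈ E, |a i|) ≤ Nm (∑ i ∈ E, a i • x i) ∧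
      Nm (∑ i ∈ E, a i • x i) ≤ C * (∑ i ∈ E, |a i|)

/-- `x` is a `K`-`c₀^𝓕` spreading model with respect to the norm function `Nm`:
a basic sequence such that for some `c, C > 0` with `c * C ≤ K`,
`c⁻¹ max_{i∈E} |a i| ≤ Nm (Σ_{i∈E} a i • x i) ≤ C max_{i∈E} |a i|` for all `E ∈ 𝓕`. -/
def IsC0SMWrt (Nm : V → ℝ) (F : Set (Finset ℕ)) (K : ℝ) (x : ℕ → V) : Prop :=
  IsBasicSeqWrt Nm x ∧ ∃ c C : ℝ, 0 < c ∧ 0 < C ∧ c * C ≤ K ∧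
    ∀ E : Finset ℕ, E ∈ F → ∀ hE : E.Nonempty, ∀ a : ℕ → ℝ,
      c⁻¹ * (E.sup' hE fun i => |a i|) ≤ Nm (∑ i ∈ E, a i • x i) ∧
      Nm (∑ i ∈ E, a i • x i) ≤ C * (E.sup' hE fun i => |a i|)

/-- `y` is the blocking of `x` given by `y n = Σ_{j ∈ E n} a j • x j`, for successive
finite sets `E 0 < E 1 < ⋯`, with each `y n ≠ 0`. -/
def IsBlockingOf (x y : ℕ → V) (E : ℕ → Finset ℕ) (a : ℕ → ℝ) : Prop :=
  (∀ n, y n ≠ 0) ∧ (∀ m n : ℕ, m < n → ∀ i ∈ E m, ∀ j ∈ E n, i < j) ∧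
  (∀ n, y n = ∑ j ∈ E n, a j • x j)

end SpreadingModels

/-- `N` is a norm on `V` equivalent to the ambient norm. -/
def IsEquivNorm {V : Type*} [NormedAddCommGroup V] [NormedSpace ℝ V] (N : V → ℝ) : Prop :=
  (∀ x y : V, N (x + y) ≤ N x + N y) ∧
  (∀ (a : ℝ) (x : V), N (a • x) = |a| * N x) ∧
  (∃ c C : ℝ, 0 < c ∧ 0 < C ∧ ∀ x : V, c * ‖x‖ ≤ N x ∧ N x ≤ C * ‖x‖)

/-!
For a grade `δ < ω^ξ` and `m ∈ ℕ` let `σ_δ(m)` be the infimum of `|Σ bⱼ xⱼ|` over the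
`ℓ₁`-normalized combinations of `x` supported on a set of `𝓢_δ` lying beyond `m`, and let
`τ = inf_δ sup_m σ_δ(m)`, which is positive since `x` is an `ℓ₁^{ω^ξ}` spreading model. Fix `δ`
with `sup_m σ_δ(m) < τ (1 + η)`, where `(1 + η) / (1 - η) = 1 + ε`, and choose successive
normalized blocks `y_n` of grade `δ` with `|y_n| < τ (1 + η)`, each far enough to the right. An
`𝓢_{ω^ξ}`-admissible union of these blocks is a set of `𝓢_{δ + ξ_q}`, `q` below its minimum,
lying where `σ_{δ + ξ_q}` already exceeds `τ (1 - η)`: this is the lower `ℓ₁`-estimate for `|·|`,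
and the triangle inequality gives the upper one. The same unions lie in `𝓢_{ω^ξ}`, so the
`‖·‖`-estimates of `x` pass to `(y_n)` unchanged and `λ = 1` works. For `ξ = 0` the families
`{A : |A| ≤ r + 1}` play the role of the `𝓢_δ`.
-/

open Finset Function

/-! ### Schreier families -/

lemma add_lt_omega1 {a b : Ordinal} (ha : a < omega1) (hb : b < omega1) : a + b < omega1 :=
  Ordinal.isPrincipal_add_ord (Cardinal.aleph0_le_aleph 1) ha hb

lemma omega0_opow_lt_omega1 {a : Ordinal} (ha : a < omega1) : Ordinal.omega0 ^ a < omega1 :=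
  Ordinal.isPrincipal_opow_ord (Cardinal.aleph0_le_aleph 1)
    (Cardinal.lt_ord.2 (by simp)) ha

lemma mem_famOp_schreierOne {G : Set (Finset ℕ)} {n : ℕ} {Es : ℕ → Finset ℕ}
    (hG : ∀ i < n, Es i ∈ G) (hne : ∀ i < n, (Es i).Nonempty)
    (hsucc : ∀ i j : ℕ, i < j → j < n → ∀ a ∈ Es i, ∀ b ∈ Es j, a < b)
    (hn : ∀ i < n, ∀ a ∈ Es i, n ≤ a) :
    (range n).biUnion Es ∈ famOp schreierOne G := by
  refine ⟨n, Es, hG, hne, hsucc, fun m hm => ?_, rfl⟩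
  obtain ⟨i, hi, rfl⟩ := mem_image.1 hm
  rw [mem_range] at hi
  calc _ ≤ #(range n) := card_image_le
    _ = n := card_range n
    _ ≤ _ := hn i hi _ (Nat.sInf_mem (coe_nonempty.2 (hne i hi)))

lemma exists_of_mem_famOp_schreierOne {G : Set (Finset ℕ)} {E : Finset ℕ}
    (hE : E ∈ famOp schreierOne G) :
    ∃ (n : ℕ) (Es : ℕ → Finset ℕ), (∀ i < n, Es i ∈ G) ∧ (∀ i < n, (Es i).Nonempty) ∧
      (∀ i j : ℕ, i < j → j < n → ∀ a ∈ Es i, ∀ b ∈ Es j, a < b) ∧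
      (∀ i < n, ∀ a ∈ Es i, n ≤ a) ∧ E = (range n).biUnion Es := by
  obtain ⟨n, Es, hG, hne, hsucc, hmin, rfl⟩ := hE
  have hmem : ∀ i < n, sInf (Es i : Set ℕ) ∈ Es i :=
    fun i hi => Nat.sInf_mem (coe_nonempty.2 (hne i hi))
  have hmono : StrictMonoOn (fun i => sInf (Es i : Set ℕ)) (range n) :=
    fun i hi j hj hij => hsucc i j hij (mem_range.1 hj) _ (hmem i (mem_range.1 hi)) _
      (hmem j (mem_range.1 hj))
  have hcard := card_image_of_injOn hmono.injOn
  rw [card_range] at hcard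
  refine ⟨n, Es, hG, hne, hsucc, fun i hi a ha => ?_, rfl⟩
  calc n = _ := hcard.symm
    _ ≤ sInf (Es i : Set ℕ) := hmin _ (mem_image_of_mem _ (mem_range.2 hi))
    _ ≤ a := Nat.sInf_le ha

lemma famOp_singletons (F : Set (Finset ℕ)) :
    famOp F {E : Finset ℕ | E = ∅ ∨ ∃ n : ℕ, E = {n}} = F := by
  ext E
  constructor
  · rintro ⟨n, Es, hG, hne, -, hF, rfl⟩
    convert hF using 1
    rw [← biUnion_singleton]
    refine biUnion_congr rfl fun i hi => ?_
    obtain h | ⟨m, hm⟩ := hG i (mem_range.1 hi)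
    · exact absurd h (hne i (mem_range.1 hi)).ne_empty
    · simp [hm]
  · intro hE
    have hfin : (Set.ofPred (· ∈ E)).Finite := E.finite_toSet
    have hcard : #hfin.toFinset = #E := by congr 1; exact E.finite_toSet_toFinset
    have himage : (range #E).image (Nat.nth (· ∈ E)) = E := by
      apply coe_injective
      rw [coe_image, coe_range, ← hcard, Nat.image_nth_Iio_card hfin]
      rfl
    refine ⟨#E, fun i => {Nat.nth (· ∈ E) i}, fun i _ => Or.inr ⟨_, rfl⟩,
      fun i _ => singleton_nonempty _, ?_, ?_, ?_⟩
    · intro i j hij hj a ha b hb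
      rw [mem_singleton] at ha hb
      subst ha hb
      exact Nat.nth_lt_nth_of_lt_card hfin hij (hcard ▸ hj)
    · simp only [coe_singleton, csInf_singleton]
      rwa [himage]
    · rw [biUnion_singleton, himage]

structure IsSuccessiveFamily (G : Set (Finset ℕ)) (g : ℕ → ℕ) (E : Finset ℕ)
    (B : ℕ → Finset ℕ) : Prop where
  mem : ∀ n ∈ E, B n ∈ G
  nonempty : ∀ n ∈ E, (B n).Nonempty
  lt : ∀ m ∈ E, ∀ n ∈ E, m < n → ∀ u ∈ B m, ∀ v ∈ B n, u < v
  le : ∀ n ∈ E, ∀ u ∈ B n, g n ≤ u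

lemma IsSuccessiveFamily.mono {G : Set (Finset ℕ)} {g g' : ℕ → ℕ} {E E' : Finset ℕ}
    {B : ℕ → Finset ℕ} (h : IsSuccessiveFamily G g E B) (hE : E' ⊆ E)
    (hg : ∀ n ∈ E', g' n ≤ g n) : IsSuccessiveFamily G g' E' B :=
  ⟨fun n hn => h.mem n (hE hn), fun n hn => h.nonempty n (hE hn),
    fun m hm n hn => h.lt m (hE hm) n (hE hn),
    fun n hn u hu => (hg n hn).trans (h.le n (hE hn) u hu)⟩

def diagSup (f : ℕ → ℕ → ℕ) (n : ℕ) : ℕ := (range (n + 1)).sup fun q => f q n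

lemma le_diagSup (f : ℕ → ℕ → ℕ) {q n : ℕ} (h : q ≤ n) : f q n ≤ diagSup f n :=
  le_sup (f := fun q => f q n) (mem_range.2 (Nat.lt_succ_of_le h))

namespace SchreierSystem

variable (SS : SchreierSystem)

lemma S_one : SS.S 1 = schreierOne := by
  rw [← zero_add 1, SS.S_succ, SS.S_zero, famOp_singletons]

lemma empty_mem {ζ : Ordinal} (hζ : ζ < omega1) : ∅ ∈ SS.S ζ := by
  induction ζ using Ordinal.limitRecOn with
  | zero => rw [SS.S_zero]; exact Or.inl rfl
  | add_one o _ =>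
    rw [SS.S_succ]
    simpa using mem_famOp_schreierOne (G := SS.S o) (n := 0) (Es := fun _ => ∅)
      (by simp) (by simp) (by simp) (by simp)
  | limit o hlim ih =>
    have h0 := SS.seq_lt o hζ hlim 0
    rw [SS.S_limit o hζ hlim]
    exact ⟨0, by simp, ih _ h0 (h0.trans hζ)⟩

lemma mem_add_one_of_mem {ζ : Ordinal} {A : Finset ℕ} (hA : A ∈ SS.S ζ) (hne : A.Nonempty)
    (hpos : ∀ j ∈ A, 1 ≤ j) : A ∈ SS.S (ζ + 1) := by
  rw [SS.S_succ]
  simpa using mem_famOp_schreierOne (n := 1) (Es := fun _ => A) (fun _ _ => hA)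
    (fun _ _ => hne) (by omega) (fun _ _ => hpos)

lemma exists_tail_subset {ζ ζ' : Ordinal} (hle : ζ ≤ ζ') (hζ' : ζ' < omega1) :
    ∃ t : ℕ, ∀ A ∈ SS.S ζ, (∀ j ∈ A, t ≤ j) → A ∈ SS.S ζ' := by
  induction ζ' using Ordinal.limitRecOn generalizing ζ with
  | zero => exact ⟨0, fun A hA _ => nonpos_iff_eq_zero.1 hle ▸ hA⟩
  | add_one o ih =>
    obtain hlt | rfl := hle.lt_or_eq
    · obtain ⟨t, ht⟩ := ih (Order.lt_add_one_iff.1 hlt) ((lt_add_one o).trans hζ')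
      refine ⟨max t 1, fun A hA hAt => ?_⟩
      obtain rfl | hne := A.eq_empty_or_nonempty
      · exact SS.empty_mem hζ'
      · exact SS.mem_add_one_of_mem (ht A hA fun j hj => le_of_max_le_left (hAt j hj)) hne
          fun j hj => le_of_max_le_right (hAt j hj)
    · exact ⟨0, fun A hA _ => hA⟩
  | limit o hlim ih =>
    obtain hlt | rfl := hle.lt_or_eq
    · obtain ⟨q, hq⟩ : ∃ q, ζ < SS.seq o q :=
        exists_lt_of_lt_ciSup (by rwa [SS.seq_iSup o hζ' hlim])
      have hqo := SS.seq_lt o hζ' hlim q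
      obtain ⟨t, ht⟩ := ih _ hqo hq.le (hqo.trans hζ')
      refine ⟨max t q, fun A hA hAt => ?_⟩
      rw [SS.S_limit o hζ' hlim]
      exact ⟨q, fun j hj => le_of_max_le_right (hAt j hj),
        ht A hA fun j hj => le_of_max_le_left (hAt j hj)⟩
    · exact ⟨0, fun A hA _ => hA⟩

lemma exists_singleton_mem {ζ : Ordinal} (hζ : ζ < omega1) :
    ∃ t : ℕ, ∀ j, t ≤ j → {j} ∈ SS.S ζ := by
  obtain ⟨t, ht⟩ := SS.exists_tail_subset zero_le hζ
  refine ⟨t, fun j hj => ht {j} ?_ fun u hu => mem_singleton.1 hu ▸ hj⟩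
  rw [SS.S_zero]
  exact Or.inr ⟨j, rfl⟩

def Convolves (α β : Ordinal) : Prop :=
  ∃ g : ℕ → ℕ, (∀ n, n ≤ g n) ∧ ∀ E ∈ SS.S β, ∀ B : ℕ → Finset ℕ,
    IsSuccessiveFamily (SS.S α) g E B → E.biUnion B ∈ SS.S (α + β)

variable {SS}

lemma convolves_zero {α : Ordinal} (hα : α < omega1) : SS.Convolves α 0 := by
  refine ⟨id, fun _ => le_rfl, fun E hE B hB => ?_⟩
  rw [SS.S_zero] at hE
  obtain rfl | ⟨m, rfl⟩ := hE
  · simpa using SS.empty_mem hα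
  · simpa using hB.mem m (mem_singleton_self m)

lemma Convolves.add_one {α β : Ordinal} (h : SS.Convolves α β) : SS.Convolves α (β + 1) := by
  obtain ⟨g, hg, hconv⟩ := h
  refine ⟨g, hg, fun E hE B hB => ?_⟩
  rw [SS.S_succ] at hE
  obtain ⟨n, Es, hEs, hne, hsucc, hn, rfl⟩ := exists_of_mem_famOp_schreierOne hE
  have hsub : ∀ i < n, Es i ⊆ (range n).biUnion Es :=
    fun i hi => subset_biUnion_of_mem Es (mem_range.2 hi)
  rw [biUnion_biUnion, ← add_assoc, SS.S_succ]
  refine mem_famOp_schreierOne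
    (fun i hi => hconv _ (hEs i hi) B (hB.mono (hsub i hi) fun _ _ => le_rfl))
    (fun i hi => ?_) (fun i j hij hj u hu v hv => ?_) (fun i hi u hu => ?_)
  · obtain ⟨b, hb⟩ := hne i hi
    obtain ⟨u, hu⟩ := hB.nonempty b (hsub i hi hb)
    exact ⟨u, mem_biUnion.2 ⟨b, hb, hu⟩⟩
  · obtain ⟨b, hb, hub⟩ := mem_biUnion.1 hu
    obtain ⟨b', hb', hvb⟩ := mem_biUnion.1 hv
    exact hB.lt b (hsub i (hij.trans hj) hb) b' (hsub j hj hb')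
      (hsucc i j hij hj b hb b' hb') u hub v hvb
  · obtain ⟨b, hb, hub⟩ := mem_biUnion.1 hu
    exact (hn i hi b hb).trans ((hg b).trans (hB.le b (hsub i hi hb) u hub))

lemma convolves_of_isSuccLimit {α β : Ordinal} (hα : α < omega1) (hβ : β < omega1)
    (hlim : Order.IsSuccLimit β) (h : ∀ q, SS.Convolves α (SS.seq β q)) :
    SS.Convolves α β := by
  choose g hg hconv using h
  choose t ht using fun q => SS.exists_tail_subset
    (add_le_add_right (SS.seq_lt β hβ hlim q).le α) (add_lt_omega1 hα hβ)
  set f : ℕ → ℕ → ℕ := fun q n => max (g q n) (t q)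
  refine ⟨fun n => max n (diagSup f n), fun n => le_max_left _ _, fun E hE B hB => ?_⟩
  rw [SS.S_limit β hβ hlim] at hE
  obtain ⟨q, hqE, hEq⟩ := hE
  have hfloor : ∀ n ∈ E, f q n ≤ max n (diagSup f n) :=
    fun n hn => (le_diagSup f (hqE n hn)).trans (le_max_right _ _)
  refine ht q _ (hconv q E hEq B (hB.mono subset_rfl fun n hn =>
    (le_max_left _ _).trans (hfloor n hn))) fun u hu => ?_
  obtain ⟨n, hn, hun⟩ := mem_biUnion.1 hu
  exact (le_max_right _ _).trans ((hfloor n hn).trans (hB.le n hn u hun))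

lemma convolves {α β : Ordinal} (hα : α < omega1) (hβ : β < omega1) : SS.Convolves α β := by
  induction β using Ordinal.limitRecOn with
  | zero => exact convolves_zero hα
  | add_one o ih => exact (ih ((lt_add_one o).trans hβ)).add_one
  | limit o hlim ih =>
    exact convolves_of_isSuccLimit hα hβ hlim fun q =>
      ih _ (SS.seq_lt o hβ hlim q) ((SS.seq_lt o hβ hlim q).trans hβ)

end SchreierSystem

/-- What the argument uses of the families `(𝓢_δ)_{δ<ω^ξ}` relative to `𝓢_{ω^ξ}`; the `q` of
`biUnion_mem` is the index `n ≤ min E` in the definition of `𝓢_{ω^ξ}` at a limit. -/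
structure IsConvolutionGrading {ι : Type*} (F : Set (Finset ℕ)) (G : ι → Set (Finset ℕ)) :
    Prop where
  nonempty : Nonempty ι
  tail_subset : ∀ i, ∃ t : ℕ, ∀ A ∈ G i, (∀ j ∈ A, t ≤ j) → A ∈ F
  singleton_mem : ∀ i, ∃ t : ℕ, ∀ j, t ≤ j → {j} ∈ G i
  biUnion_mem : ∀ i, ∃ (ρ : ℕ → ι) (g : ℕ → ℕ), ∀ E ∈ F, ∀ B : ℕ → Finset ℕ,
    IsSuccessiveFamily (G i) g E B →
      E.biUnion B ∈ F ∧ ∃ q, (∀ n ∈ E, q ≤ n) ∧ E.biUnion B ∈ G (ρ q)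

lemma isConvolutionGrading_schreierOne :
    IsConvolutionGrading schreierOne fun r : ℕ => {A : Finset ℕ | #A ≤ r + 1} where
  nonempty := ⟨0⟩
  tail_subset r := ⟨r + 1, fun A hA hAt j hj => hA.trans (hAt j hj)⟩
  singleton_mem r := ⟨0, fun j _ => by simp⟩
  biUnion_mem r := by
    refine ⟨fun q => q * (r + 1), fun n => n * (r + 1), fun E hE B hB => ?_⟩
    have hcard : #(E.biUnion B) ≤ #E * (r + 1) := card_biUnion_le_card_mul _ _ _ hB.mem
    refine ⟨fun u hu => ?_, #E, hE, hcard.trans (Nat.le_succ _)⟩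
    obtain ⟨n, hn, hun⟩ := mem_biUnion.1 hu
    calc #(E.biUnion B) ≤ #E * (r + 1) := hcard
      _ ≤ n * (r + 1) := Nat.mul_le_mul_right _ (hE n hn)
      _ ≤ u := hB.le n hn u hun

lemma SchreierSystem.isConvolutionGrading_opow (SS : SchreierSystem) {ξ : Ordinal}
    (hξ : ξ < omega1) (hξ0 : ξ ≠ 0) :
    IsConvolutionGrading (SS.S (Ordinal.omega0 ^ ξ))
      fun δ : Set.Iio (Ordinal.omega0 ^ ξ) => SS.S δ := by
  have hγ := omega0_opow_lt_omega1 hξ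
  have hlim : Order.IsSuccLimit (Ordinal.omega0 ^ ξ) :=
    Ordinal.isSuccLimit_opow_left Ordinal.isSuccLimit_omega0 hξ0
  refine ⟨⟨⟨0, Ordinal.opow_pos ξ Ordinal.omega0_pos⟩⟩,
    fun δ => SS.exists_tail_subset δ.2.le hγ, fun δ => SS.exists_singleton_mem (δ.2.trans hγ),
    fun δ => ?_⟩
  obtain ⟨g, -, hg⟩ := SS.convolves (δ.2.trans hγ) hγ
  choose gq hgq using fun q =>
    (SS.convolves (δ.2.trans hγ) ((SS.seq_lt _ hγ hlim q).trans hγ)).imp fun _ => And.right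
  refine ⟨fun q => ⟨δ + SS.seq _ q, Ordinal.isPrincipal_add_omega0_opow ξ δ.2
      (SS.seq_lt _ hγ hlim q)⟩, fun n => max (g n) (diagSup gq n), fun E hE B hB => ⟨?_, ?_⟩⟩
  · rw [← Ordinal.add_omega0_opow δ.2]
    exact hg E hE B (hB.mono subset_rfl fun n _ => le_max_left _ _)
  · rw [SS.S_limit _ hγ hlim] at hE
    obtain ⟨q, hqE, hEq⟩ := hE
    exact ⟨q, hqE, hgq q E hEq B (hB.mono subset_rfl fun n hn =>
      (le_diagSup gq (hqE n hn)).trans (le_max_right _ _))⟩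

/-! ### Blockings -/

lemma exists_eq_on_of_pairwise_disjoint {ι α M : Type*} [Zero M] {A : ι → Finset α}
    (hA : Pairwise (Disjoint on A)) (b : ι → α → M) :
    ∃ c : α → M, (∀ i, ∀ j ∈ A i, c j = b i j) ∧ ∀ j, (∀ i, j ∉ A i) → c j = 0 := by
  classical
  refine ⟨fun j => if h : ∃ i, j ∈ A i then b h.choose j else 0, fun i j hj => ?_,
    fun j hj => dif_neg (by simpa using hj)⟩
  have h : ∃ i, j ∈ A i := ⟨i, hj⟩
  simp only [dif_pos h]
  rw [hA.eq (not_disjoint_iff.2 ⟨j, h.choose_spec, hj⟩)]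

lemma pairwise_disjoint_of_successive {A : ℕ → Finset ℕ}
    (h : ∀ m n : ℕ, m < n → ∀ i ∈ A m, ∀ j ∈ A n, i < j) : Pairwise (Disjoint on A) := by
  intro m n hmn
  refine disjoint_left.2 fun j hjm hjn => ?_
  rcases hmn.lt_or_gt with hlt | hlt
  · exact lt_irrefl j (h m n hlt j hjm j hjn)
  · exact lt_irrefl j (h n m hlt j hjn j hjm)

section Blocking

variable {V : Type*} [AddCommGroup V] [Module ℝ V]

lemma Seminorm.sum_smul_le_mul (p : Seminorm ℝ V) {E : Finset ℕ} {y : ℕ → V} {C : ℝ}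
    (hy : ∀ n ∈ E, p (y n) ≤ C) (α : ℕ → ℝ) :
    p (∑ n ∈ E, α n • y n) ≤ C * ∑ n ∈ E, |α n| :=
  calc p (∑ n ∈ E, α n • y n) ≤ ∑ n ∈ E, p (α n • y n) :=
        le_sum_of_subadditive p (map_zero p).le (map_add_le_add p) E _
    _ = ∑ n ∈ E, |α n| * p (y n) := by simp only [map_smul_eq_mul, Real.norm_eq_abs]
    _ ≤ ∑ n ∈ E, |α n| * C :=
        sum_le_sum fun n hn => mul_le_mul_of_nonneg_left (hy n hn) (abs_nonneg _)
    _ = C * ∑ n ∈ E, |α n| := by rw [← sum_mul, mul_comm]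

lemma Seminorm.mul_sum_abs_le_of_normalized (p : Seminorm ℝ V) {x : ℕ → V} {A : Finset ℕ}
    {k : ℝ} (h : ∀ b : ℕ → ℝ, ∑ j ∈ A, |b j| = 1 → k ≤ p (∑ j ∈ A, b j • x j))
    (b : ℕ → ℝ) : k * ∑ j ∈ A, |b j| ≤ p (∑ j ∈ A, b j • x j) := by
  rcases (sum_nonneg fun j _ => abs_nonneg (b j) : 0 ≤ ∑ j ∈ A, |b j|).eq_or_lt with hs | hs
  · rw [← hs, mul_zero]
    exact apply_nonneg p _
  · set s := ∑ j ∈ A, |b j|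
    have hb := h (fun j => s⁻¹ * b j) (by
      simp_rw [abs_mul, abs_inv, abs_of_pos hs, ← mul_sum]
      exact inv_mul_cancel₀ hs.ne')
    simp_rw [mul_smul, ← smul_sum, map_smul_eq_mul, Real.norm_eq_abs, abs_inv,
      abs_of_pos hs] at hb
    calc k * s ≤ s⁻¹ * p (∑ j ∈ A, b j • x j) * s := mul_le_mul_of_nonneg_right hb hs.le
      _ = p (∑ j ∈ A, b j • x j) := by field_simp

lemma IsBasicSeqWrt.of_le_of_le {Nm Nm' : V → ℝ} {x : ℕ → V} (hx : IsBasicSeqWrt Nm x)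
    {c C : ℝ} (hc : 0 < c) (hC : 0 < C) (hle : ∀ v, c * Nm v ≤ Nm' v ∧ Nm' v ≤ C * Nm v) :
    IsBasicSeqWrt Nm' x := by
  obtain ⟨hx0, K, hK, hbasic⟩ := hx
  refine ⟨hx0, C * K / c, by positivity, fun a m n hmn => ?_⟩
  have hn := (hle (∑ i ∈ range n, a i • x i)).1
  calc Nm' (∑ i ∈ range m, a i • x i) ≤ C * Nm (∑ i ∈ range m, a i • x i) := (hle _).2
    _ ≤ C * (K * Nm (∑ i ∈ range n, a i • x i)) :=
        mul_le_mul_of_nonneg_left (hbasic a m n hmn) hC.le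
    _ ≤ C * (K * (Nm' (∑ i ∈ range n, a i • x i) / c)) := by
        gcongr
        rwa [le_div_iff₀ hc, mul_comm]
    _ = C * K / c * Nm' (∑ i ∈ range n, a i • x i) := by ring

namespace IsBlockingOf

variable {x y : ℕ → V} {A : ℕ → Finset ℕ} {a : ℕ → ℝ}

lemma nonempty (h : IsBlockingOf x y A a) (n : ℕ) : (A n).Nonempty := by
  rw [nonempty_iff_ne_empty]
  intro he
  exact h.1 n (by rw [h.2.2 n, he, sum_empty])

lemma exists_sum_smul_eq (h : IsBlockingOf x y A a) (α : ℕ → ℝ) :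
    ∃ c : ℕ → ℝ, (∀ T : Finset ℕ, ∑ n ∈ T, α n • y n = ∑ j ∈ T.biUnion A, c j • x j) ∧
      (∀ T : Finset ℕ, ∑ j ∈ T.biUnion A, |c j| = ∑ n ∈ T, |α n| * ∑ j ∈ A n, |a j|) ∧
      ∀ j, (∀ n, j ∉ A n) → c j = 0 := by
  have hdisj := pairwise_disjoint_of_successive h.2.1
  obtain ⟨c, hc, hc0⟩ := exists_eq_on_of_pairwise_disjoint hdisj fun n j => α n * a j
  refine ⟨c, fun T => ?_, fun T => ?_, hc0⟩
  · rw [sum_biUnion (hdisj.set_pairwise _)]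
    refine sum_congr rfl fun n _ => ?_
    rw [h.2.2 n, smul_sum]
    exact sum_congr rfl fun j hj => by rw [hc n j hj, mul_smul]
  · rw [sum_biUnion (hdisj.set_pairwise _)]
    refine sum_congr rfl fun n _ => ?_
    rw [mul_sum]
    exact sum_congr rfl fun j hj => by rw [hc n j hj, abs_mul]

lemma isBasicSeqWrt (h : IsBlockingOf x y A a) {Nm : V → ℝ} (hx : IsBasicSeqWrt Nm x) :
    IsBasicSeqWrt Nm y := by
  obtain ⟨-, K, hK, hbasic⟩ := hx
  refine ⟨h.1, K, hK, fun α m n hmn => ?_⟩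
  obtain ⟨c, hsum, -, hc0⟩ := h.exists_sum_smul_eq α
  set L : ℕ → ℕ := fun m => (A m).min' (h.nonempty m)
  have hL : Monotone L := monotone_nat_of_le_succ fun m =>
    (h.2.1 m (m + 1) (lt_add_one m) _ (min'_mem _ _) _ (min'_mem _ _)).le
  -- the partial sums of `y` are the partial sums of `x` up to the start of the next block
  have hrange : ∀ m, ∑ i ∈ range m, α i • y i = ∑ j ∈ range (L m), c j • x j := by
    intro m
    rw [hsum]
    refine sum_subset (fun j hj => ?_) fun j hjL hjU => ?_
    · obtain ⟨i, hi, hji⟩ := mem_biUnion.1 hj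
      exact mem_range.2 (h.2.1 i m (mem_range.1 hi) j hji _ (min'_mem _ _))
    · rw [hc0 j fun n hjn => ?_, zero_smul]
      rcases lt_or_ge n m with hnm | hnm
      · exact hjU (mem_biUnion.2 ⟨n, mem_range.2 hnm, hjn⟩)
      · exact (mem_range.1 hjL).not_ge ((hL hnm).trans (min'_le _ _ hjn))
  rw [hrange m, hrange n]
  exact hbasic c _ _ (hL hmn)

lemma isL1SMWrt (h : IsBlockingOf x y A a) (hnorm : ∀ n, ∑ j ∈ A n, |a j| = 1)
    {p : Seminorm ℝ V} {F : Set (Finset ℕ)} (hbasic : IsBasicSeqWrt p y) {k C K : ℝ}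
    (hk : 0 < k) (hC : 0 < C) (hK : k⁻¹ * C ≤ K) (hup : ∀ n, p (y n) ≤ C)
    (hlow : ∀ E ∈ F, ∀ c : ℕ → ℝ,
      k * ∑ j ∈ E.biUnion A, |c j| ≤ p (∑ j ∈ E.biUnion A, c j • x j)) :
    IsL1SMWrt p F K y := by
  refine ⟨hbasic, k⁻¹, C, inv_pos.2 hk, hC, hK, fun E hE α =>
    ⟨?_, p.sum_smul_le_mul (fun n _ => hup n) α⟩⟩
  obtain ⟨c, hsum, habs, -⟩ := h.exists_sum_smul_eq α
  simpa only [inv_inv, hsum, habs, hnorm, mul_one] using hlow E hE c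

end IsBlockingOf

lemma exists_successive_seq {α : Type*} (s : α → Finset ℕ) (P : ℕ → α → Prop)
    (h : ∀ n T, ∃ a, P n a ∧ (s a).Nonempty ∧ ∀ j ∈ s a, T ≤ j) :
    ∃ f : ℕ → α, (∀ n, P n (f n)) ∧ ∀ m n, m < n → ∀ i ∈ s (f m), ∀ j ∈ s (f n), i < j := by
  choose F hP hne hT using h
  let f : ℕ → α := fun n => Nat.rec (F 0 0) (fun k a => F (k + 1) ((s a).sup id + 1)) n
  have hstep : ∀ k, ∀ i ∈ s (f k), ∀ j ∈ s (f (k + 1)), i < j := fun k i hi j hj =>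
    Nat.lt_of_lt_of_le (Nat.lt_succ_of_le (le_sup (f := id) hi)) (hT _ _ j hj)
  have hfne : ∀ n, (s (f n)).Nonempty := fun n => by cases n <;> exact hne _ _
  refine ⟨f, fun n => by cases n <;> exact hP _ _, fun m n hmn => ?_⟩
  induction n, hmn using Nat.le_induction with
  | base => exact hstep m
  | succ n _ ih =>
    intro i hi j hj
    obtain ⟨w, hw⟩ := hfne n
    exact (ih i hi w hw).trans (hstep n w hw j hj)

lemma exists_normalized_blocks (x : ℕ → V) (P : ℕ → Finset ℕ → V → Prop)
    (h : ∀ n T, ∃ A : Finset ℕ, (∀ j ∈ A, T ≤ j) ∧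
      ∃ b : ℕ → ℝ, ∑ j ∈ A, |b j| = 1 ∧ P n A (∑ j ∈ A, b j • x j)) :
    ∃ (A : ℕ → Finset ℕ) (a : ℕ → ℝ), (∀ m n, m < n → ∀ i ∈ A m, ∀ j ∈ A n, i < j) ∧
      ∀ n, ∑ j ∈ A n, |a j| = 1 ∧ P n (A n) (∑ j ∈ A n, a j • x j) := by
  obtain ⟨f, hf, hsucc⟩ := exists_successive_seq (fun p : Finset ℕ × (ℕ → ℝ) => p.1)
    (fun n p => ∑ j ∈ p.1, |p.2 j| = 1 ∧ P n p.1 (∑ j ∈ p.1, p.2 j • x j)) fun n T => by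
      obtain ⟨A, hAT, b, hb, hP⟩ := h n T
      exact ⟨(A, b), ⟨hb, hP⟩, nonempty_of_sum_ne_zero (hb ▸ one_ne_zero), hAT⟩
  obtain ⟨a, ha, -⟩ := exists_eq_on_of_pairwise_disjoint (pairwise_disjoint_of_successive hsucc)
    fun n => (f n).2
  refine ⟨fun n => (f n).1, a, hsucc, fun n => ?_⟩
  have habs : ∑ j ∈ (f n).1, |a j| = ∑ j ∈ (f n).1, |(f n).2 j| :=
    sum_congr rfl fun j hj => by rw [ha n j hj]
  have hvec : ∑ j ∈ (f n).1, a j • x j = ∑ j ∈ (f n).1, (f n).2 j • x j :=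
    sum_congr rfl fun j hj => by rw [ha n j hj]
  rw [habs, hvec]
  exact hf n

end Blocking

/-! ### The non-distortion argument -/

lemma exists_near_iInf_iSup_sInf {ι : Type*} [Nonempty ι] (S : ι → ℕ → Set ℝ)
    (h0 : ∀ i m, ∀ r ∈ S i m, 0 ≤ r) {K : ℝ} (hK : ∀ i m, ∃ r ∈ S i m, r ≤ K) {k : ℝ}
    (hk : 0 < k) (hlow : ∀ i, ∃ m, ∀ r ∈ S i m, k ≤ r) {δ : ℝ} (hδ : 0 < δ) :
    ∃ τ > 0, ∃ i, (∀ m, ∃ r ∈ S i m, r < τ * (1 + δ)) ∧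
      ∀ i', ∃ m, ∀ r ∈ S i' m, τ * (1 - δ) < r := by
  have hbdd : ∀ i m, BddBelow (S i m) := fun i m => ⟨0, h0 i m⟩
  have hne : ∀ i m, (S i m).Nonempty := fun i m => (hK i m).imp fun _ h => h.1
  have hσK : ∀ i, BddAbove (Set.range fun m => sInf (S i m)) := by
    refine fun i => ⟨K, ?_⟩
    rintro _ ⟨m, rfl⟩
    obtain ⟨r, hr, hrK⟩ := hK i m
    exact (csInf_le (hbdd i m) hr).trans hrK
  have hkτ : ∀ i, k ≤ ⨆ m, sInf (S i m) := fun i => by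
    obtain ⟨m, hm⟩ := hlow i
    exact (le_csInf (hne i m) hm).trans (le_ciSup (hσK i) m)
  set τ := ⨅ i, ⨆ m, sInf (S i m)
  have hτ : 0 < τ := hk.trans_le (le_ciInf hkτ)
  obtain ⟨i, hi⟩ : ∃ i, ⨆ m, sInf (S i m) < τ * (1 + δ) :=
    exists_lt_of_ciInf_lt (by nlinarith)
  refine ⟨τ, hτ, i, fun m => exists_lt_of_csInf_lt (hne i m) ((le_ciSup (hσK i) m).trans_lt hi),
    fun i' => ?_⟩
  have hτi' : τ ≤ ⨆ m, sInf (S i' m) := ciInf_le ⟨k, by rintro _ ⟨j, rfl⟩; exact hkτ j⟩ i'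
  obtain ⟨m, hm⟩ := exists_lt_of_lt_ciSup ((by nlinarith : τ * (1 - δ) < τ).trans_le hτi')
  exact ⟨m, fun r hr => hm.trans_le (csInf_le (hbdd i' m) hr)⟩

lemma IsConvolutionGrading.exists_blocks {V : Type*} [AddCommGroup V] [Module ℝ V] {ι : Type*}
    {F : Set (Finset ℕ)} {G : ι → Set (Finset ℕ)} (hG : IsConvolutionGrading F G)
    {x : ℕ → V} {p : V → ℝ} {i : ι} {k C : ℝ}
    (hnear : ∀ m, ∃ A ∈ G i, (∀ j ∈ A, m ≤ j) ∧ ∃ b : ℕ → ℝ,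
      ∑ j ∈ A, |b j| = 1 ∧ p (∑ j ∈ A, b j • x j) < C)
    (hfar : ∀ i', ∃ M, ∀ A ∈ G i', (∀ j ∈ A, M ≤ j) → ∀ b : ℕ → ℝ,
      k * ∑ j ∈ A, |b j| ≤ p (∑ j ∈ A, b j • x j)) :
    ∃ (A : ℕ → Finset ℕ) (a : ℕ → ℝ), (∀ m n, m < n → ∀ u ∈ A m, ∀ v ∈ A n, u < v) ∧
      (∀ n, ∑ j ∈ A n, |a j| = 1 ∧ A n ∈ F ∧ p (∑ j ∈ A n, a j • x j) < C) ∧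
      ∀ E ∈ F, E.biUnion A ∈ F ∧ ∀ c : ℕ → ℝ,
        k * ∑ j ∈ E.biUnion A, |c j| ≤ p (∑ j ∈ E.biUnion A, c j • x j) := by
  choose M hM using hfar
  obtain ⟨ρ, g, hconv⟩ := hG.biUnion_mem i
  obtain ⟨t, ht⟩ := hG.tail_subset i
  -- block `n` must lie beyond the floor `g n` of the convolution, in the tail of `G i` inside
  -- `F`, and beyond `M (ρ q)` for every grade `ρ q` that a union starting at `n` can reach
  set T : ℕ → ℕ := fun n => max (max (g n) t) (diagSup (fun q _ => M (ρ q)) n)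
  obtain ⟨A, a, hsucc, hA⟩ := exists_normalized_blocks x
    (fun n A v => A ∈ G i ∧ (∀ j ∈ A, T n ≤ j) ∧ p v < C) fun n m => by
      obtain ⟨A, hA, hAm, b, hb, hpb⟩ := hnear (max m (T n))
      exact ⟨A, fun j hj => le_of_max_le_left (hAm j hj), b, hb, hA,
        fun j hj => le_of_max_le_right (hAm j hj), hpb⟩
  choose hnorm hAG hAT hpA using hA
  refine ⟨A, a, hsucc, fun n => ⟨hnorm n, ht _ (hAG n) fun j hj =>
    (le_max_right _ _).trans ((le_max_left _ _).trans (hAT n j hj)), hpA n⟩, fun E hE => ?_⟩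
  obtain ⟨hUF, q, hqE, hUG⟩ := hconv E hE A
    ⟨fun n _ => hAG n, fun n _ => nonempty_of_sum_ne_zero ((hnorm n).symm ▸ one_ne_zero),
      fun m _ n _ h => hsucc m n h,
      fun n _ j hj => (le_max_left _ _).trans ((le_max_left _ _).trans (hAT n j hj))⟩
  refine ⟨hUF, hM (ρ q) _ hUG fun j hj => ?_⟩
  obtain ⟨n, hn, hjn⟩ := mem_biUnion.1 hj
  exact (le_diagSup (fun q _ => M (ρ q)) (hqE n hn)).trans
    ((le_max_right _ _).trans (hAT n j hjn))

section EquivalentNorm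

variable {X : Type*} [NormedAddCommGroup X] [NormedSpace ℝ X] {N : X → ℝ}

def IsEquivNorm.toSeminorm (hN : IsEquivNorm N) : Seminorm ℝ X :=
  Seminorm.of N hN.1 fun a v => by rw [hN.2.1, Real.norm_eq_abs]

lemma exists_almost_isometric_level {ι : Type*} {F : Set (Finset ℕ)} {G : ι → Set (Finset ℕ)}
    (hG : IsConvolutionGrading F G) {x : ℕ → X} {K : ℝ}
    (hx : IsL1SMWrt (fun v => ‖v‖) F K x) (hN : IsEquivNorm N) {δ : ℝ} (hδ : 0 < δ) :
    ∃ τ > 0, ∃ i, (∀ m, ∃ A ∈ G i, (∀ j ∈ A, m ≤ j) ∧ ∃ b : ℕ → ℝ,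
        ∑ j ∈ A, |b j| = 1 ∧ N (∑ j ∈ A, b j • x j) < τ * (1 + δ)) ∧
      ∀ i', ∃ M, ∀ A ∈ G i', (∀ j ∈ A, M ≤ j) → ∀ b : ℕ → ℝ,
        τ * (1 - δ) * ∑ j ∈ A, |b j| ≤ N (∑ j ∈ A, b j • x j) := by
  obtain ⟨-, cx, Cx, hcx, -, -, hest⟩ := hx
  obtain ⟨cN, CN, hcN, hCN, hNeq⟩ := hN.2.2
  have := hG.nonempty
  choose t ht using hG.tail_subset
  choose s hs using hG.singleton_mem
  set S : ι → ℕ → Set ℝ := fun i m => {r | ∃ A ∈ G i, (∀ j ∈ A, m ≤ j) ∧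
    ∃ b : ℕ → ℝ, ∑ j ∈ A, |b j| = 1 ∧ N (∑ j ∈ A, b j • x j) = r}
  have h0 : ∀ i m, ∀ r ∈ S i m, 0 ≤ r := by
    rintro i m _ ⟨A, -, -, b, -, rfl⟩
    exact (mul_nonneg hcN.le (norm_nonneg _)).trans (hNeq _).1
  have hK : ∀ i m, ∃ r ∈ S i m, r ≤ CN * Cx := by
    intro i m
    set j := max m (max (s i) (t i))
    have hjF : {j} ∈ F := ht i _ (hs i j (by omega)) fun u hu => by
      rw [mem_singleton.1 hu]; omega
    refine ⟨N (x j), ⟨{j}, hs i j (by omega), fun u hu => by rw [mem_singleton.1 hu]; omega,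
      fun _ => 1, by simp⟩, ?_⟩
    have hxj : ‖x j‖ ≤ Cx := by simpa using (hest {j} hjF fun _ => 1).2
    exact (hNeq _).2.trans (mul_le_mul_of_nonneg_left hxj hCN.le)
  have hlow : ∀ i, ∃ m, ∀ r ∈ S i m, cN * cx⁻¹ ≤ r := by
    refine fun i => ⟨t i, ?_⟩
    rintro _ ⟨A, hA, hAt, b, hb, rfl⟩
    have hxA := (hest A (ht i A hA hAt) b).1
    rw [hb, mul_one] at hxA
    exact (mul_le_mul_of_nonneg_left hxA hcN.le).trans (hNeq _).1
  obtain ⟨τ, hτ, i, hnear, hfar⟩ := exists_near_iInf_iSup_sInf S h0 hK (by positivity) hlow hδ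
  refine ⟨τ, hτ, i, fun m => ?_, fun i' => ?_⟩
  · obtain ⟨_, ⟨A, hA, hAm, b, hb, rfl⟩, hlt⟩ := hnear m
    exact ⟨A, hA, hAm, b, hb, hlt⟩
  · obtain ⟨M, hM⟩ := hfar i'
    exact ⟨M, fun A hA hAM => hN.toSeminorm.mul_sum_abs_le_of_normalized fun b hb =>
      (hM _ ⟨A, hA, hAM, b, hb, rfl⟩).le⟩

theorem exists_blocking_of_isConvolutionGrading {ι : Type*} {F : Set (Finset ℕ)}
    {G : ι → Set (Finset ℕ)} (hG : IsConvolutionGrading F G) {x : ℕ → X} {K : ℝ}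
    (hx : IsL1SMWrt (fun v => ‖v‖) F K x) (hN : IsEquivNorm N) {ε : ℝ} (hε : 0 < ε) :
    ∃ (y : ℕ → X) (A : ℕ → Finset ℕ) (a : ℕ → ℝ), IsBlockingOf x y A a ∧
      IsL1SMWrt N F (1 + ε) y ∧ IsL1SMWrt (fun v => ‖v‖) F K y := by
  -- chosen so that `(1 + δ) / (1 - δ) = 1 + ε`
  set δ := ε / (ε + 2)
  obtain ⟨τ, hτ, i, hnear, hfar⟩ := exists_almost_isometric_level hG hx hN (δ := δ) (by positivity)
  have hδ1 : 0 < 1 - δ := by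
    rw [sub_pos, div_lt_one (by positivity)]
    linarith
  have hratio : (τ * (1 - δ))⁻¹ * (τ * (1 + δ)) ≤ 1 + ε := by
    rw [inv_mul_le_iff₀ (by positivity)]
    exact le_of_eq (by simp only [δ]; field_simp; ring)
  obtain ⟨A, a, hsucc, hA, hunion⟩ := hG.exists_blocks hnear hfar
  choose hnorm hAF hNy using hA
  obtain ⟨hxbasic, cx, Cx, hcx, hCx, hcC, hest⟩ := hx
  set y : ℕ → X := fun n => ∑ j ∈ A n, a j • x j
  have hyx : ∀ n, cx⁻¹ ≤ ‖y n‖ ∧ ‖y n‖ ≤ Cx := fun n => by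
    simpa only [hnorm n, mul_one] using hest _ (hAF n) a
  have hy : IsBlockingOf x y A a := ⟨fun n hy0 => by
    have := (hyx n).1
    rw [hy0, norm_zero] at this
    exact (inv_pos.2 hcx).not_ge this, hsucc, fun n => rfl⟩
  have hybasic := hy.isBasicSeqWrt hxbasic
  obtain ⟨cN, CN, hcN, hCN, hNeq⟩ := hN.2.2
  refine ⟨y, A, a, hy, ?_, ?_⟩
  · exact hy.isL1SMWrt hnorm (p := hN.toSeminorm) (hybasic.of_le_of_le hcN hCN hNeq)
      (by positivity) (by positivity) hratio (fun n => (hNy n).le) fun E hE => (hunion E hE).2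
  · exact hy.isL1SMWrt hnorm (p := normSeminorm ℝ X) hybasic (inv_pos.2 hcx) hCx
      (by rwa [inv_inv]) (fun n => (hyx n).2) fun E hE c => (hest _ (hunion E hE).1 c).1

end EquivalentNorm

theorem statement10_general {X : Type*} [NormedAddCommGroup X] [NormedSpace ℝ X]
    (SS : SchreierSystem) (ξ : Ordinal) (hξ : ξ < omega1)
    (C : ℝ) (x : ℕ → X)
    (hx : IsL1SMWrt (fun v => ‖v‖) (SS.S (Ordinal.omega0 ^ ξ)) C x)
    (N : X → ℝ) (hN : IsEquivNorm N) (ε : ℝ) (hε : 0 < ε) :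
    ∃ (y : ℕ → X) (E : ℕ → Finset ℕ) (a : ℕ → ℝ) (lam : ℝ), 0 < lam ∧
      IsBlockingOf x y E a ∧
      IsL1SMWrt N (SS.S (Ordinal.omega0 ^ ξ)) (1 + ε) y ∧
      IsL1SMWrt (fun v => ‖v‖) (SS.S (Ordinal.omega0 ^ ξ)) C (fun n => lam • y n) := by
  obtain ⟨y, A, a, hy, hyN, hynorm⟩ : ∃ (y : ℕ → X) (A : ℕ → Finset ℕ) (a : ℕ → ℝ),
      IsBlockingOf x y A a ∧ IsL1SMWrt N (SS.S (Ordinal.omega0 ^ ξ)) (1 + ε) y ∧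
        IsL1SMWrt (fun v => ‖v‖) (SS.S (Ordinal.omega0 ^ ξ)) C y := by
    rcases eq_or_ne ξ 0 with rfl | hξ0
    · rw [Ordinal.opow_zero, SS.S_one] at hx ⊢
      exact exists_blocking_of_isConvolutionGrading isConvolutionGrading_schreierOne hx hN hε
    · exact exists_blocking_of_isConvolutionGrading (SS.isConvolutionGrading_opow hξ hξ0) hx hN hε
  exact ⟨y, A, a, 1, one_pos, hy, hyN, by simpa only [one_smul] using hynorm⟩

/-- If `(x_i)` is a `C`-`ℓ₁^{ω^ξ}` spreading model in `(X, ‖·‖)` and `|·|`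
is an equivalent norm on `X`, then for each `ε > 0` there are a blocking `(y_i)` of `(x_i)`
and `λ > 0` such that `(y_i)` is a `(1+ε)`-`ℓ₁^{ω^ξ}` spreading model in `(X, |·|)` and
`(λ y_i)` is a `C`-`ℓ₁^{ω^ξ}` spreading model in `(X, ‖·‖)`. -/
theorem statement10 {X : Type*} [NormedAddCommGroup X] [NormedSpace ℝ X] [CompleteSpace X]
    (SS : SchreierSystem) (ξ : Ordinal) (hξ : ξ < omega1)
    (C : ℝ) (hC : 1 ≤ C) (x : ℕ → X)
    (hx : IsL1SMWrt (fun v => ‖v‖) (SS.S (Ordinal.omega0 ^ ξ)) C x)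
    (N : X → ℝ) (hN : IsEquivNorm N) (ε : ℝ) (hε : 0 < ε) :
    ∃ (y : ℕ → X) (E : ℕ → Finset ℕ) (a : ℕ → ℝ) (lam : ℝ), 0 < lam ∧
      IsBlockingOf x y E a ∧
      IsL1SMWrt N (SS.S (Ordinal.omega0 ^ ξ)) (1 + ε) y ∧
      IsL1SMWrt (fun v => ‖v‖) (SS.S (Ordinal.omega0 ^ ξ)) C (fun n => lam • y n) :=
  statement10_general SS ξ hξ C x hx N hN ε hε
end
end
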